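/- arXiv:2601.03756 — 3 statements merged into one kernel-verified Lean document; each statement's English description precedes it below -/
import Mathlib

section
/- Let F be a group, w, v ∈ F, and let G_w = F / ⟨⟨w⟩⟩ with projection π_w : F → G_w. Suppose π_w(v) is killed by every homomorphism from G_w to a finite group. Then for any group homomorphism φ : F → G and any normal subgroup N of G with G/N residually finite, if φ(w) ∈ N then φ(v) ∈ N. -/
/-- Key step: if the image of `v` in the one-relator quotient `F/⟨⟨w⟩⟩` is killed by every
homomorphism to a finite group, then for any `φ : F →* G` and normal `N ≤ G` with `G/N`
residually finite, `φ w ∈ N` implies `φ v ∈ N`. -/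
theorem stmt2 {F G : Type*} [Group F] [Group G] (w v : F)
    (hv : ∀ (Q : Type) [Group Q] [Finite Q]
      (ψ : (F ⧸ Subgroup.normalClosure {w}) →* Q),
      ψ ((QuotientGroup.mk' (Subgroup.normalClosure {w})) v) = 1)
    (φ : F →* G) (N : Subgroup G) [N.Normal]
    (hrf : ∀ q : G ⧸ N, q ≠ 1 →
      ∃ (Q : Type) (_ : Group Q) (_ : Finite Q) (ψ : (G ⧸ N) →* Q), ψ q ≠ 1)
    (hw : φ w ∈ N) :
    φ v ∈ N := by
  by_contra h
  have hq : (QuotientGroup.mk' N) (φ v) ≠ 1 := by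
    simpa [QuotientGroup.eq_one_iff] using h
  obtain ⟨Q, _, _, ψ, hψ⟩ := hrf _ hq
  set f : F →* Q := ψ.comp ((QuotientGroup.mk' N).comp φ) with hf
  have hker : Subgroup.normalClosure {w} ≤ f.ker := by
    apply Subgroup.normalClosure_le_normal
    intro x hx
    rcases hx with rfl
    have h1 : ((φ x : G) : G ⧸ N) = 1 := (QuotientGroup.eq_one_iff _).mpr hw
    simp [hf, f, MonoidHom.mem_ker, h1]
  have := hv Q (QuotientGroup.lift _ f hker)
  simp only [QuotientGroup.mk'_apply, QuotientGroup.lift_mk'] at this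
  exact hψ this
end

section
/- In SL(2,C), let A = ((1, ζ),(0, 1)) and B = ((x, y),(z, u)) with xu - yz = 1. Set Γ = B^{-1} A B. Then tr(Γ^{-1} A Γ A^{-2}) = 2 z⁴ ζ⁴ + 2. -/
/-- With `A = (1 ζ; 0 1)`, `B = (x y; z u)` of determinant 1 and `Γ = B⁻¹ A B`,
the trace of `Γ⁻¹ A Γ A⁻²` equals `2 z⁴ ζ⁴ + 2`. -/
theorem stmt6 (ζ x y z u : ℂ) (hdet : x * u - y * z = 1) :
    let A : Matrix (Fin 2) (Fin 2) ℂ := !![1, ζ; 0, 1]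
    let B : Matrix (Fin 2) (Fin 2) ℂ := !![x, y; z, u]
    let Γ := B⁻¹ * A * B
    Matrix.trace (Γ⁻¹ * A * Γ * (A⁻¹ * A⁻¹)) = 2 * z ^ 4 * ζ ^ 4 + 2 := by
  intro A B Γ
  have hdetA : A.det = 1 := by simp [A, Matrix.det_fin_two_of]
  have hdetB : B.det = 1 := by
    simp only [B, Matrix.det_fin_two_of]; linear_combination hdet
  have hA : A⁻¹ = !![1, -ζ; 0, 1] := by
    rw [Matrix.inv_def, hdetA, Matrix.adjugate_fin_two_of]
    simp
  have hB : B⁻¹ = !![u, -y; -z, x] := by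
    rw [Matrix.inv_def, hdetB, Matrix.adjugate_fin_two_of]
    simp
  have hΓ : Γ⁻¹ = B⁻¹ * A⁻¹ * B := by
    apply Matrix.inv_eq_right_inv
    calc Γ * (B⁻¹ * A⁻¹ * B)
        = B⁻¹ * (A * ((B * B⁻¹) * (A⁻¹ * B))) := by
          simp only [Γ, Matrix.mul_assoc]
      _ = B⁻¹ * ((A * A⁻¹) * B) := by
          rw [Matrix.mul_nonsing_inv _ (by simp [hdetB]), Matrix.one_mul,
            ← Matrix.mul_assoc A]
      _ = B⁻¹ * B := by
          rw [Matrix.mul_nonsing_inv _ (by simp [hdetA]), Matrix.one_mul]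
      _ = 1 := Matrix.nonsing_inv_mul _ (by simp [hdetB])
  rw [show Γ⁻¹ * A * Γ * (A⁻¹ * A⁻¹) = Γ⁻¹ * A * (B⁻¹ * A * B) * (A⁻¹ * A⁻¹) from rfl,
    hΓ, hA, hB]
  simp only [A, B, Matrix.mul_fin_two, Matrix.trace_fin_two_of]
  linear_combination (2 + 2 * x * u - 2 * y * z) * hdet
end

section
/- Let F₂ = ⟨x, y⟩ be the free group on two generators. For n ≥ 1, define w_n = y(xy)^{n+1}, g = [x,y], and g_n = (W_n^{-1} g W_n) g^{-2} where W_n = w_n^{-1} g w_n. Then the reduced cyclic word of g_n determines n; in particular g_n and g_m are conjugate in F₂ if and only if n = m. -/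
/-!
The trace of a representation `F₂ → SL(2, ℤ)` is a conjugacy invariant. Send `x ↦ A`, `y ↦ B`
with `AB` unipotent: then `(AB)^k = C k` is affine in `k`, so the trace of the image of `g_k` is a
polynomial in `k`, namely `3k⁴ + 36k³ + 147k² + 234k + 111`, which is strictly increasing on `ℕ`.
-/

open Matrix
open scoped MatrixGroups

theorem Matrix.SpecialLinearGroup.trace_eq_of_isConj {n R : Type*} [Fintype n] [DecidableEq n]
    [CommRing R] {u v : SpecialLinearGroup n R} (h : IsConj u v) :
    trace (u : Matrix n n R) = trace (v : Matrix n n R) := by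
  obtain ⟨c, rfl⟩ := isConj_iff.mp h
  rw [coe_mul, trace_mul_comm, ← coe_mul, inv_mul_cancel_left]

namespace CommutatorConjugates

def A : SL(2, ℤ) := ⟨!![-1, -1; 1, 0], by norm_num [det_fin_two_of]⟩

def B : SL(2, ℤ) := ⟨!![-1, 0; -1, -1], by norm_num [det_fin_two_of]⟩

def C (k : ℤ) : SL(2, ℤ) := ⟨!![1 + k, k; -k, 1 - k], by simp [det_fin_two_of]; ring⟩

lemma C_mul_C (a b : ℤ) : C a * C b = C (a + b) := by
  refine Subtype.ext ?_
  rw [Matrix.SpecialLinearGroup.coe_mul]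
  simp only [C, mul_fin_two, EmbeddingLike.apply_eq_iff_eq, vecCons_inj, and_true]
  refine ⟨⟨?_, ?_⟩, ?_, ?_⟩ <;> ring

lemma A_mul_B : A * B = C 1 := by
  refine Subtype.ext ?_
  rw [Matrix.SpecialLinearGroup.coe_mul]
  simp only [A, B, C, mul_fin_two]
  norm_num

lemma A_mul_B_pow (k : ℕ) : (A * B) ^ k = C k := by
  induction k with
  | zero => exact Subtype.ext (by simp [C, one_fin_two])
  | succ k ih => rw [pow_succ, ih, A_mul_B, C_mul_C, Nat.cast_succ]

def sl2Rep : FreeGroup Bool →* SL(2, ℤ) := FreeGroup.lift fun b => if b then A else B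

def gSeq (k : ℕ) : FreeGroup Bool :=
  let x : FreeGroup Bool := FreeGroup.of true
  let y : FreeGroup Bool := FreeGroup.of false
  let g := x⁻¹ * y⁻¹ * x * y
  let w := y * (x * y) ^ (k + 1)
  let W := w⁻¹ * g * w
  W⁻¹ * g * W * g⁻¹ * g⁻¹

lemma trace_sl2Rep_gSeq (k : ℕ) :
    trace (sl2Rep (gSeq k) : Matrix (Fin 2) (Fin 2) ℤ) =
      ((3 * k ^ 4 + 36 * k ^ 3 + 147 * k ^ 2 + 234 * k + 111 : ℕ) : ℤ) := by
  simp only [gSeq, map_mul, map_inv, map_pow, sl2Rep, FreeGroup.lift_apply_of, if_true,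
    Bool.false_eq_true, if_false, A_mul_B_pow, _root_.mul_inv_rev, inv_inv,
    Matrix.SpecialLinearGroup.coe_mul, Matrix.SpecialLinearGroup.coe_inv]
  simp only [A, B, C, adjugate_fin_two_of, mul_fin_two, trace_fin_two_of]
  push_cast
  ring

lemma quartic_strictMono :
    StrictMono fun k : ℕ => 3 * k ^ 4 + 36 * k ^ 3 + 147 * k ^ 2 + 234 * k + 111 :=
  fun _ _ h => by dsimp only; gcongr

end CommutatorConjugates

open CommutatorConjugates in
theorem stmt16_general (m n : ℕ) :
    let x : FreeGroup Bool := FreeGroup.of true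
    let y : FreeGroup Bool := FreeGroup.of false
    let g := x⁻¹ * y⁻¹ * x * y
    let w : ℕ → FreeGroup Bool := fun k => y * (x * y) ^ (k + 1)
    let W : ℕ → FreeGroup Bool := fun k => (w k)⁻¹ * g * (w k)
    let gg : ℕ → FreeGroup Bool := fun k => (W k)⁻¹ * g * (W k) * g⁻¹ * g⁻¹
    (IsConj (gg m) (gg n) ↔ m = n) := by
  intro x y g w W gg
  refine ⟨fun h => ?_, fun h => h ▸ IsConj.refl _⟩
  replace h : IsConj (gSeq m) (gSeq n) := h
  have htrace := SpecialLinearGroup.trace_eq_of_isConj (sl2Rep.map_isConj h)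
  rw [trace_sl2Rep_gSeq, trace_sl2Rep_gSeq, Nat.cast_inj] at htrace
  exact quartic_strictMono.injective htrace

/-- In the free group `F₂ = ⟨x, y⟩`, with `g = [x,y] = x⁻¹y⁻¹xy`, `w_n = y(xy)^{n+1}`,
`W_n = w_n⁻¹ g w_n` and `g_n = W_n⁻¹ g W_n g⁻²`, the elements `g_m` and `g_n` are
conjugate iff `m = n`. -/
theorem stmt16 (m n : ℕ) (hm : 1 ≤ m) (hn : 1 ≤ n) :
    let x : FreeGroup Bool := FreeGroup.of true
    let y : FreeGroup Bool := FreeGroup.of false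
    let g := x⁻¹ * y⁻¹ * x * y
    let w : ℕ → FreeGroup Bool := fun k => y * (x * y) ^ (k + 1)
    let W : ℕ → FreeGroup Bool := fun k => (w k)⁻¹ * g * (w k)
    let gg : ℕ → FreeGroup Bool := fun k => (W k)⁻¹ * g * (W k) * g⁻¹ * g⁻¹
    (IsConj (gg m) (gg n) ↔ m = n) :=
  stmt16_general m n
end
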